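/- Let C(x) = (1/2)·log₂(1+x). For every P > 0 and N > 0 there exist nonnegative reals R₁, R₂, R₃ and an α ∈ [0,1] satisfying R₁ < C(αP/N), R₂ < C((1-α)P/(αP+N)), and R₃ < C((1-α)P/(αP+N)), such that for every α' ∈ [0,1] the four conditions R₁ < C(α'P/N), R₂ < C((1-α')P/(α'P+N)), R₃ < C((1-α')P/(α'P+N)), and R₂ + R₃ < C((1-α')P/(α'P+N)) cannot all hold simultaneously. (This shows that, for the three-receiver AWGN broadcast channel with equal noise variances N₁ = N₂ = N₃ = N, the scheme using multiplexing coding and superposition coding without index coding, whose achievable region requires the additional sum-rate condition R₂ + R₃ < C((1-α')P/(α'P+N₁)), cannot achieve the capacity region.) -/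

import Mathlib

/-!
Take `R₁ = 0` and split the single-user capacity evenly: `R₂ = R₃ = C(t)` with
`t = √(1 + P/N) - 1`, so that `R₂ + R₃ = C(P/N)` because `(1 + t)² = 1 + P/N`.
A small power `α < tN/P` for the first layer keeps the interference-limited SINR
`(1-α)P/(αP+N)` above `t`, so the triple lies in the capacity region. But no SINR
exceeds `P/N`, so the sum-rate condition of multiplexing fails for every `α'`.
-/

noncomputable def awgnC (x : ℝ) : ℝ := (1 / 2) * Real.logb 2 (1 + x)

open Set

lemma awgnC_strictMonoOn : StrictMonoOn awgnC (Ioi (-1)) := by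
  intro x hx y _ hxy
  have hx : 0 < 1 + x := by simp only [mem_Ioi] at hx; linarith
  have : Real.logb 2 (1 + x) < Real.logb 2 (1 + y) :=
    Real.logb_lt_logb one_lt_two hx (by linarith)
  unfold awgnC
  linarith

lemma awgnC_le_awgnC {x y : ℝ} (hx : 0 ≤ x) (hxy : x ≤ y) : awgnC x ≤ awgnC y :=
  awgnC_strictMonoOn.monotoneOn (by simp only [mem_Ioi]; linarith)
    (by simp only [mem_Ioi]; linarith) hxy

lemma awgnC_lt_awgnC {x y : ℝ} (hx : 0 ≤ x) (hxy : x < y) : awgnC x < awgnC y :=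
  awgnC_strictMonoOn (by simp only [mem_Ioi]; linarith) (by simp only [mem_Ioi]; linarith) hxy

lemma awgnC_zero : awgnC 0 = 0 := by simp [awgnC]

lemma awgnC_nonneg {x : ℝ} (hx : 0 ≤ x) : 0 ≤ awgnC x :=
  awgnC_zero ▸ awgnC_le_awgnC le_rfl hx

lemma awgnC_pos {x : ℝ} (hx : 0 < x) : 0 < awgnC x :=
  awgnC_zero ▸ awgnC_lt_awgnC le_rfl hx

lemma two_mul_awgnC_sqrt_sub_one {x : ℝ} (hx : -1 ≤ x) :
    2 * awgnC (√(1 + x) - 1) = awgnC x := by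
  have hlog : Real.logb 2 √(1 + x) = Real.logb 2 (1 + x) / 2 := by
    rw [Real.logb, Real.log_sqrt (by linarith), Real.logb]
    ring
  simp only [awgnC, add_sub_cancel, hlog]
  ring

lemma sinr_nonneg {α P N : ℝ} (hα₀ : 0 ≤ α) (hα₁ : α ≤ 1) (hP : 0 ≤ P) (hN : 0 ≤ N) :
    0 ≤ (1 - α) * P / (α * P + N) := by
  have : 0 ≤ α * P := mul_nonneg hα₀ hP
  exact div_nonneg (mul_nonneg (by linarith) hP) (by linarith)

lemma sinr_le_snr {α P N : ℝ} (hα : 0 ≤ α) (hP : 0 ≤ P) (hN : 0 < N) :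
    (1 - α) * P / (α * P + N) ≤ P / N := by
  have hαP : 0 ≤ α * P := mul_nonneg hα hP
  rw [div_le_div_iff₀ (by linarith) hN]
  nlinarith [mul_nonneg hαP hP]

/-- The identity `P - tN = Nt(1 + t)`, forced by `(1 + t)² = 1 + P/N`, turns the condition
`t < SINR` into `αP < Nt`. -/
lemma lt_sinr_of_mul_lt {α t P N : ℝ} (ht : 0 ≤ t) (htPN : (1 + t) ^ 2 = 1 + P / N)
    (hN : 0 < N) (hα : 0 ≤ α) (hαP : α * P < N * t) :
    t < (1 - α) * P / (α * P + N) := by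
  have hP : P = N * (t * (t + 2)) := by
    field_simp at htPN
    linarith
  have hαP₀ : 0 ≤ α * P := mul_nonneg hα (hP ▸ by positivity)
  rw [lt_div_iff₀ (by linarith)]
  nlinarith [mul_lt_mul_of_pos_right hαP (by linarith : (0 : ℝ) < 1 + t)]

/-- For the three-receiver AWGN BC with equal noise variances `N`, there is a rate triple
in the capacity region (achieved with some power split `α`) that violates, for every power
split `α'`, the extra sum-rate condition `R₂ + R₃ < C((1-α')P/(α'P+N))` required by the
scheme using multiplexing and superposition coding without index coding; hence that scheme
cannot achieve the capacity region. -/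
theorem multiplexing_without_index_coding_suboptimal
    (P N : ℝ) (hP : 0 < P) (hN : 0 < N) :
    ∃ R₁ R₂ R₃ α : ℝ, 0 ≤ R₁ ∧ 0 ≤ R₂ ∧ 0 ≤ R₃ ∧ 0 ≤ α ∧ α ≤ 1 ∧
      R₁ < awgnC (α * P / N) ∧
      R₂ < awgnC ((1 - α) * P / (α * P + N)) ∧
      R₃ < awgnC ((1 - α) * P / (α * P + N)) ∧
      ∀ α' : ℝ, 0 ≤ α' → α' ≤ 1 →
        ¬ (R₁ < awgnC (α' * P / N) ∧
           R₂ < awgnC ((1 - α') * P / (α' * P + N)) ∧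
           R₃ < awgnC ((1 - α') * P / (α' * P + N)) ∧
           R₂ + R₃ < awgnC ((1 - α') * P / (α' * P + N))) := by
  have hPN : 0 < P / N := div_pos hP hN
  set t := √(1 + P / N) - 1 with ht_def
  have ht : 0 < t := by
    rw [ht_def, sub_pos, Real.lt_sqrt zero_le_one]
    linarith
  have htPN : (1 + t) ^ 2 = 1 + P / N := by
    rw [ht_def, add_sub_cancel, Real.sq_sqrt (by linarith)]
  have hsum : awgnC t + awgnC t = awgnC (P / N) := by
    rw [← two_mul, two_mul_awgnC_sqrt_sub_one (by linarith)]
  have htP : N * t < 2 * P := by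
    have : t < P / N := by nlinarith
    rw [lt_div_iff₀ hN] at this
    linarith
  set α := N * t / (2 * P)
  have hα₀ : 0 < α := by positivity
  have hα₁ : α ≤ 1 := (div_le_one (by positivity)).mpr htP.le
  have hαP : α * P < N * t := by
    have : α * P = N * t / 2 := by simp only [α]; field_simp
    nlinarith [mul_pos hN ht]
  have hrate : awgnC t < awgnC ((1 - α) * P / (α * P + N)) :=
    awgnC_lt_awgnC ht.le (lt_sinr_of_mul_lt ht.le htPN hN hα₀.le hαP)
  refine ⟨0, awgnC t, awgnC t, α, le_rfl, awgnC_nonneg ht.le, awgnC_nonneg ht.le, hα₀.le, hα₁,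
    awgnC_pos (by positivity), hrate, hrate, ?_⟩
  rintro α' hα'₀ hα'₁ ⟨-, -, -, hmultiplexed⟩
  have := awgnC_le_awgnC (sinr_nonneg hα'₀ hα'₁ hP.le hN.le) (sinr_le_snr hα'₀ hP.le hN)
  linarith
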